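/- arXiv:1604.07638 — 6 statements merged into one kernel-verified Lean document; each statement's English description precedes it below -/
import Mathlib

section
/- Let F be a monotone submodular set function on a finite ground set, let S* be a finite set with cardinality |S*| = K ≥ 1, and let S be any finite set. Then there exists an element a ∈ S* such that F(S ∪ {a}) − F(S) ≥ (1/K)·(F(S*) − F(S)). -/
/-- A set function on a finite ground set is submodular if for all finite sets
`S ⊆ T` and every element `a`, `F (T ∪ {a}) − F T ≤ F (S ∪ {a}) − F S`. -/
def Submodular {α : Type*} [DecidableEq α] (F : Finset α → ℝ) : Prop :=
  ∀ S T : Finset α, S ⊆ T → ∀ a : α,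
    F (insert a T) - F T ≤ F (insert a S) - F S

/-- A set function is monotone if `S ⊆ T` implies `F S ≤ F T`. -/
def MonotoneSetFun {α : Type*} (F : Finset α → ℝ) : Prop :=
  ∀ S T : Finset α, S ⊆ T → F S ≤ F T

lemma sum_marginal_ge {α : Type*} [DecidableEq α]
    (F : Finset α → ℝ) (hsub : Submodular F) (S : Finset α) :
    ∀ T : Finset α, F (S ∪ T) - F S ≤ ∑ a ∈ T, (F (insert a S) - F S) := by
  intro T
  induction T using Finset.induction_on with
  | empty => simp
  | @insert b T' hb ih =>
    rw [Finset.sum_insert hb, Finset.union_insert]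
    have h1 : F (insert b (S ∪ T')) - F (S ∪ T') ≤ F (insert b S) - F S :=
      hsub S (S ∪ T') Finset.subset_union_left b
    linarith

/-- For a monotone submodular set function `F`, a set `S*` of cardinality `K ≥ 1`,
and any finite set `S`, there is an element `a ∈ S*` whose marginal gain with
respect to `S` is at least `(1/K)·(F(S*) − F(S))`. -/
theorem exists_elem_marginal_ge_average
    {α : Type*} [Fintype α] [DecidableEq α]
    (F : Finset α → ℝ) (hmono : MonotoneSetFun F) (hsub : Submodular F)
    (K : ℕ) (hK : 1 ≤ K) (Sstar : Finset α) (hcard : Sstar.card = K)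
    (S : Finset α) :
    ∃ a ∈ Sstar, F (insert a S) - F S ≥ (1 / (K : ℝ)) * (F Sstar - F S) := by
  have hKpos : (0 : ℝ) < K := by exact_mod_cast hK
  have hne : Sstar.Nonempty := Finset.card_pos.mp (by omega)
  have hsum : F Sstar - F S ≤ ∑ a ∈ Sstar, (F (insert a S) - F S) := by
    have h := sum_marginal_ge F hsub S Sstar
    have hm : F Sstar ≤ F (S ∪ Sstar) := hmono _ _ Finset.subset_union_right
    linarith
  obtain ⟨a, ha, hmax⟩ := Finset.exists_max_image Sstar (fun a => F (insert a S) - F S) hne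
  refine ⟨a, ha, ?_⟩
  have hbound : ∑ b ∈ Sstar, (F (insert b S) - F S) ≤ K * (F (insert a S) - F S) := by
    calc ∑ b ∈ Sstar, (F (insert b S) - F S)
        ≤ ∑ _b ∈ Sstar, (F (insert a S) - F S) :=
          Finset.sum_le_sum fun b hb => hmax b hb
      _ = K * (F (insert a S) - F S) := by
          rw [Finset.sum_const, hcard]; simp [nsmul_eq_mul]
  rw [ge_iff_le, div_mul_eq_mul_div, one_mul, div_le_iff₀ hKpos]
  linarith [mul_comm (F (insert a S) - F S) (K : ℝ)]
end

section
/- (Theorem 2.) For each stage t = 1,…,T let S_t be an arbitrary finite subset of the ground set (the previously selected seeds at stage t), let ã be a node maximizing Σ_{t=1}^T (f_t(S_t ∪ {a}) − f_t(S_t)) over all nodes a of the ground set, let a_t be arbitrary nodes, and define the position weak regret Reg := Σ_{t=1}^T (f_t(S_t ∪ {ã}) − f_t(S_t)) − Σ_{t=1}^T (f_t(S_t ∪ {a_t}) − f_t(S_t)). Then Σ_{t=1}^T (f_t(S_t ∪ {a_t}) − f_t(S_t)) ≥ (1/K)·(OPT − Σ_{t=1}^T f_t(S_t)) − Reg. 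-/
lemma submod_union_bound {α : Type*} [DecidableEq α] {F : Finset α → ℝ}
    (hsub : Submodular F) (A S : Finset α) :
    F (S ∪ A) - F S ≤ ∑ x ∈ A, (F (insert x S) - F S) := by
  induction A using Finset.induction_on with
  | empty => simp
  | @insert x A hx ih =>
    rw [Finset.sum_insert hx]
    have h1 : S ∪ insert x A = insert x (S ∪ A) := by
      ext y; simp [or_left_comm]
    have h2 := hsub S (S ∪ A) Finset.subset_union_left x
    rw [h1]
    linarith

/-- **Theorem 2.** For each stage `t` let `S t` be an arbitrary set of previously
selected seeds, let `ã` maximize the total marginal gain over all nodes, let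
`a t` be arbitrary nodes, and let `Reg` be the position weak regret. Then the
total marginal gain of the selected nodes is at least
`(1/K)·(OPT − Σ_t f_t(S_t)) − Reg`, where `OPT` is the maximum over seed sets of
cardinality at most `K` of `Σ_t f_t(S)`. -/
theorem position_marginal_gain_ge
    {α : Type*} [Fintype α] [DecidableEq α]
    (T K : ℕ) (hT : 1 ≤ T) (hK : 1 ≤ K)
    (f : Fin T → Finset α → ℝ)
    (hmono : ∀ t, MonotoneSetFun (f t)) (hsub : ∀ t, Submodular (f t))
    (OPT : ℝ)
    (hOPT : IsGreatest {x : ℝ | ∃ S : Finset α, S.card ≤ K ∧ x = ∑ t, f t S} OPT)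
    (S : Fin T → Finset α) (atil : α)
    (hatil : ∀ a : α,
      ∑ t, (f t (insert a (S t)) - f t (S t)) ≤
        ∑ t, (f t (insert atil (S t)) - f t (S t)))
    (a : Fin T → α) (Reg : ℝ)
    (hReg : Reg = ∑ t, (f t (insert atil (S t)) - f t (S t)) -
        ∑ t, (f t (insert (a t) (S t)) - f t (S t))) :
    ∑ t, (f t (insert (a t) (S t)) - f t (S t)) ≥
      (1 / (K : ℝ)) * (OPT - ∑ t, f t (S t)) - Reg := by
  set G := ∑ t, (f t (insert atil (S t)) - f t (S t)) with hG
  have hKpos : (0:ℝ) < K := by exact_mod_cast hK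
  -- G ≥ 0
  have hG0 : 0 ≤ G := Finset.sum_nonneg fun t _ => by
    have := hmono t (S t) (insert atil (S t)) (Finset.subset_insert _ _)
    linarith
  -- OPT bound
  obtain ⟨Sstar, hcard, hOPTeq⟩ := hOPT.1
  have key : OPT - ∑ t, f t (S t) ≤ K * G := by
    have h1 : ∀ t, f t Sstar - f t (S t) ≤
        ∑ x ∈ Sstar, (f t (insert x (S t)) - f t (S t)) := by
      intro t
      have hm := hmono t Sstar (S t ∪ Sstar) Finset.subset_union_right
      have := submod_union_bound (hsub t) Sstar (S t)
      linarith
    have h2 : ∑ t, (f t Sstar - f t (S t)) ≤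
        ∑ t, ∑ x ∈ Sstar, (f t (insert x (S t)) - f t (S t)) :=
      Finset.sum_le_sum fun t _ => h1 t
    rw [Finset.sum_comm] at h2
    have h3 : ∑ x ∈ Sstar, ∑ t, (f t (insert x (S t)) - f t (S t)) ≤
        ∑ x ∈ Sstar, G := Finset.sum_le_sum fun x _ => hatil x
    have h4 : ∑ x ∈ Sstar, G = (Sstar.card : ℝ) * G := by
      rw [Finset.sum_const, nsmul_eq_mul]
    have h5 : (Sstar.card : ℝ) * G ≤ K * G := by
      apply mul_le_mul_of_nonneg_right _ hG0
      exact_mod_cast hcard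
    have h6 : ∑ t, (f t Sstar - f t (S t)) = OPT - ∑ t, f t (S t) := by
      rw [Finset.sum_sub_distrib, hOPTeq]
    linarith
  have : (1 / (K:ℝ)) * (OPT - ∑ t, f t (S t)) ≤ G := by
    rw [div_mul_eq_mul_div, one_mul, div_le_iff₀ hKpos]
    linarith [key]
  have hsel : ∑ t, (f t (insert (a t) (S t)) - f t (S t)) = G - Reg := by
    rw [hReg]; ring
  rw [hsel]
  linarith
end

section
/- For every real number x ≤ 1, exp(x) ≤ 1 + x + (e − 2)·x², where e is Euler's number. -/
/-!
Write `exp x - 1 - x = ∑ x ^ (n + 2) / (n + 2)!`. For `0 ≤ x ≤ 1` each term is at most `x ^ 2`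
times the corresponding term at `x = 1`, and those sum to `e - 2`. For `x ≤ 0` the bound
`exp x ≤ 1 + x + x ^ 2 / 2` suffices, because `e - 2 ≥ 1 / 2`; it follows by inverting
`1 - x + x ^ 2 / 2 ≤ exp (-x)`, since `(1 + x + x ^ 2 / 2) (1 - x + x ^ 2 / 2) = 1 + x ^ 4 / 4`.
-/

open Real Nat

theorem hasSum_exp_sub_one_sub (x : ℝ) :
    HasSum (fun n : ℕ ↦ x ^ (n + 2) / (n + 2)!) (exp x - 1 - x) := by
  have h := (hasSum_nat_add_iff' 2).2 (NormedSpace.expSeries_div_hasSum_exp x)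
  rw [← Real.exp_eq_exp_ℝ] at h
  simpa [Finset.sum_range_succ, sub_sub] using h

theorem exp_sub_one_sub_le_mul_sq {x : ℝ} (h0 : 0 ≤ x) (h1 : x ≤ 1) :
    exp x - 1 - x ≤ (exp 1 - 1 - 1) * x ^ 2 := by
  refine hasSum_le (fun n ↦ ?_) (hasSum_exp_sub_one_sub x)
    ((hasSum_exp_sub_one_sub 1).mul_right (x ^ 2))
  rw [one_pow, one_div_mul_eq_div, pow_add, mul_comm]
  gcongr
  exact mul_le_of_le_one_right (sq_nonneg x) (pow_le_one₀ h0 h1)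

theorem exp_le_one_add_add_sq_div_two_of_nonpos {x : ℝ} (hx : x ≤ 0) :
    exp x ≤ 1 + x + x ^ 2 / 2 := by
  have hq : 1 - x + x ^ 2 / 2 ≤ exp (-x) := by
    simpa [sub_eq_add_neg] using quadratic_le_exp_of_nonneg (neg_nonneg.2 hx)
  have hq0 : 0 < 1 - x + x ^ 2 / 2 := by nlinarith
  rw [exp_neg, le_inv_comm₀ hq0 (exp_pos x)] at hq
  refine hq.trans ?_
  rw [inv_le_iff_one_le_mul₀ hq0]
  have hprod : (1 + x + x ^ 2 / 2) * (1 - x + x ^ 2 / 2) = 1 + x ^ 4 / 4 := by ring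
  rw [hprod]
  linarith [show 0 ≤ x ^ 4 by positivity]

/-- For every real `x ≤ 1`, `exp x ≤ 1 + x + (e − 2)·x²`. -/
theorem exp_le_one_add_add_sq (x : ℝ) (hx : x ≤ 1) :
    Real.exp x ≤ 1 + x + (Real.exp 1 - 2) * x ^ 2 := by
  rcases le_total 0 x with h0 | h0
  · linarith [exp_sub_one_sub_le_mul_sq h0 hx]
  · have he : 1 / 2 ≤ exp 1 - 2 := by linarith [quadratic_le_exp_of_nonneg zero_le_one]
    linarith [exp_le_one_add_add_sq_div_two_of_nonpos h0,
      mul_le_mul_of_nonneg_right he (sq_nonneg x)]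
end

section
/- (Per-round potential inequality in the proof of Theorem 4.) Let N ≥ 1, let γ ∈ (0,1), and let C, D > 0. Let v : Fin N → ℝ be strictly positive with V := Σ_n v(n), and define weights w(n) := (1−γ)·v(n)/V + γ/N. Let r̂ : Fin N → ℝ be nonnegative with γ·r̂(n)/(N·C) ≤ 1 for every n, and let r ∈ ℝ satisfy Σ_n w(n)·r̂(n) ≤ r and Σ_n w(n)·r̂(n)² ≤ D·Σ_n r̂(n). Then (Σ_n v(n)·exp(γ·r̂(n)/(N·C)))/V ≤ 1 + (γ/(N·C))/(1−γ)·r + (e−2)·(γ/(N·C))²·D/(1−γ)·Σ_n r̂(n). -/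
set_option maxHeartbeats 1000000

lemma exp_quadratic_bound {x : ℝ} (h0 : 0 ≤ x) (h1 : x ≤ 1) :
    Real.exp x ≤ 1 + x + (Real.exp 1 - 2) * x ^ 2 := by
  have hexp : ∀ y : ℝ, Real.exp y = ∑' n : ℕ, y ^ n / n.factorial := by
    intro y
    rw [Real.exp_eq_exp_ℝ, NormedSpace.exp_eq_tsum_div]
  have key : ∀ y : ℝ, Real.exp y
      = (1 + y) + ∑' k : ℕ, y ^ (k + 2) / (k + 2).factorial := by
    intro y
    rw [hexp y, ← Summable.sum_add_tsum_nat_add 2 (Real.summable_pow_div_factorial y)]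
    norm_num [Finset.sum_range_succ]
  have hsx : Summable (fun k : ℕ => x ^ (k + 2) / (k + 2).factorial) :=
    (summable_nat_add_iff 2).mpr (Real.summable_pow_div_factorial x)
  have hs1 : Summable (fun k : ℕ => (1:ℝ) ^ (k + 2) / (k + 2).factorial) :=
    (summable_nat_add_iff 2).mpr (Real.summable_pow_div_factorial 1)
  have hmain : ∑' k : ℕ, x ^ (k + 2) / (k + 2).factorial
      ≤ x ^ 2 * ∑' k : ℕ, (1:ℝ) ^ (k + 2) / (k + 2).factorial := by
    rw [← tsum_mul_left]
    refine Summable.tsum_le_tsum (fun k => ?_) hsx (hs1.mul_left _)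
    have hxk : x ^ (k + 2) ≤ x ^ 2 := by
      calc x ^ (k + 2) = x ^ 2 * x ^ k := by ring
        _ ≤ x ^ 2 * 1 := mul_le_mul_of_nonneg_left (pow_le_one₀ h0 h1) (by positivity)
        _ = x ^ 2 := by ring
    rw [one_pow, mul_one_div]
    exact div_le_div_of_nonneg_right hxk (by positivity) |>.trans_eq rfl
  have hkey1 : Real.exp 1 - 2 = ∑' k : ℕ, (1:ℝ) ^ (k + 2) / (k + 2).factorial := by
    have := key 1; linarith
  have := key x
  nlinarith [hmain]



/-- **Per-round potential inequality in the proof of Theorem 4.** For strictly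
positive weights `v` with total `V`, mixed weights `w n = (1−γ)·v n / V + γ/N`,
and nonnegative reward estimates `r̂` with `γ·r̂ n/(N·C) ≤ 1`, if
`Σ_n w n · r̂ n ≤ r` and `Σ_n w n · (r̂ n)² ≤ D · Σ_n r̂ n`, then the ratio of the
updated total weight to `V` is at most
`1 + (γ/(N·C))/(1−γ)·r + (e−2)·(γ/(N·C))²·D/(1−γ)·Σ_n r̂ n`. -/
theorem per_round_potential_inequality
    (N : ℕ) (hN : 1 ≤ N) (γ C D : ℝ)
    (hγ0 : 0 < γ) (hγ1 : γ < 1) (hC : 0 < C) (hD : 0 < D)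
    (v : Fin N → ℝ) (hv : ∀ n, 0 < v n)
    (V : ℝ) (hV : V = ∑ n, v n)
    (w : Fin N → ℝ) (hw : ∀ n, w n = (1 - γ) * v n / V + γ / N)
    (rhat : Fin N → ℝ) (hrhat0 : ∀ n, 0 ≤ rhat n)
    (hrhat1 : ∀ n, γ * rhat n / (N * C) ≤ 1)
    (r : ℝ)
    (hfact1 : ∑ n, w n * rhat n ≤ r)
    (hfact2 : ∑ n, w n * rhat n ^ 2 ≤ D * ∑ n, rhat n) :
    (∑ n, v n * Real.exp (γ * rhat n / (N * C))) / V ≤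
      1 + (γ / (N * C)) / (1 - γ) * r +
        (Real.exp 1 - 2) * (γ / (N * C)) ^ 2 * D / (1 - γ) * ∑ n, rhat n := by
  have hNpos : (0:ℝ) < N := by exact_mod_cast hN
  have hNC : (0:ℝ) < N * C := by positivity
  set a : ℝ := γ / (N * C) with ha_def
  have ha : 0 < a := by positivity
  have h1γ : (0:ℝ) < 1 - γ := by linarith
  have hV0 : 0 < V := by
    rw [hV]
    exact Finset.sum_pos (fun n _ => hv n) ⟨⟨0, hN⟩, Finset.mem_univ _⟩
  have hxeq : ∀ n, γ * rhat n / (N * C) = a * rhat n := fun n => by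
    rw [ha_def]; ring
  have he2 : 0 ≤ Real.exp 1 - 2 := by
    have := Real.exp_one_gt_d9; linarith
  -- pointwise exponential bound
  have hstep : ∀ n, v n * Real.exp (γ * rhat n / (N * C)) ≤
      v n * (1 + a * rhat n + (Real.exp 1 - 2) * (a * rhat n) ^ 2) := by
    intro n
    apply mul_le_mul_of_nonneg_left _ (hv n).le
    rw [hxeq n]
    exact exp_quadratic_bound (mul_nonneg ha.le (hrhat0 n)) ((hxeq n) ▸ hrhat1 n)
  have hsum1 : ∑ n, v n * Real.exp (γ * rhat n / (N * C)) ≤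
      V + a * ∑ n, v n * rhat n +
        (Real.exp 1 - 2) * a ^ 2 * ∑ n, v n * rhat n ^ 2 := by
    calc ∑ n, v n * Real.exp (γ * rhat n / (N * C))
        ≤ ∑ n, v n * (1 + a * rhat n + (Real.exp 1 - 2) * (a * rhat n) ^ 2) :=
          Finset.sum_le_sum (fun n _ => hstep n)
      _ = V + a * ∑ n, v n * rhat n +
          (Real.exp 1 - 2) * a ^ 2 * ∑ n, v n * rhat n ^ 2 := by
          rw [hV, Finset.mul_sum, Finset.mul_sum, ← Finset.sum_add_distrib,
            ← Finset.sum_add_distrib]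
          exact Finset.sum_congr rfl (fun n _ => by ring)
  -- v n / V ≤ w n / (1-γ) termwise, hence weighted sums compare
  have hvw : ∀ n, v n / V ≤ w n / (1 - γ) := by
    intro n
    rw [hw n, le_div_iff₀ h1γ]
    have h1 : 0 ≤ γ / (N:ℝ) := by positivity
    have : v n / V * (1 - γ) = (1 - γ) * v n / V := by ring
    linarith [this]
  have hS1 : (∑ n, v n * rhat n) / V ≤ r / (1 - γ) := by
    have h1 : (∑ n, v n * rhat n) / V ≤ (∑ n, w n * rhat n) / (1 - γ) := by
      rw [Finset.sum_div, Finset.sum_div]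
      refine Finset.sum_le_sum (fun n _ => ?_)
      have := mul_le_mul_of_nonneg_right (hvw n) (hrhat0 n)
      calc v n * rhat n / V = v n / V * rhat n := by ring
        _ ≤ w n / (1 - γ) * rhat n := this
        _ = w n * rhat n / (1 - γ) := by ring
    exact h1.trans (div_le_div_of_nonneg_right hfact1 h1γ.le |>.trans_eq rfl)
  have hS2 : (∑ n, v n * rhat n ^ 2) / V ≤ D * (∑ n, rhat n) / (1 - γ) := by
    have h1 : (∑ n, v n * rhat n ^ 2) / V ≤ (∑ n, w n * rhat n ^ 2) / (1 - γ) := by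
      rw [Finset.sum_div, Finset.sum_div]
      refine Finset.sum_le_sum (fun n _ => ?_)
      have := mul_le_mul_of_nonneg_right (hvw n) (by positivity : (0:ℝ) ≤ rhat n ^ 2)
      calc v n * rhat n ^ 2 / V = v n / V * rhat n ^ 2 := by ring
        _ ≤ w n / (1 - γ) * rhat n ^ 2 := this
        _ = w n * rhat n ^ 2 / (1 - γ) := by ring
    exact h1.trans (div_le_div_of_nonneg_right hfact2 h1γ.le |>.trans_eq rfl)
  have hdiv : (∑ n, v n * Real.exp (γ * rhat n / (N * C))) / V ≤
      1 + a * ((∑ n, v n * rhat n) / V) +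
        (Real.exp 1 - 2) * a ^ 2 * ((∑ n, v n * rhat n ^ 2) / V) := by
    rw [div_le_iff₀ hV0]
    calc (∑ n, v n * Real.exp (γ * rhat n / (N * C)))
        ≤ V + a * ∑ n, v n * rhat n +
            (Real.exp 1 - 2) * a ^ 2 * ∑ n, v n * rhat n ^ 2 := hsum1
      _ = (1 + a * ((∑ n, v n * rhat n) / V) +
            (Real.exp 1 - 2) * a ^ 2 * ((∑ n, v n * rhat n ^ 2) / V)) * V := by
          field_simp
  refine hdiv.trans ?_
  have t1 : a * ((∑ n, v n * rhat n) / V) ≤ a / (1 - γ) * r := by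
    have := mul_le_mul_of_nonneg_left hS1 ha.le
    calc a * ((∑ n, v n * rhat n) / V) ≤ a * (r / (1 - γ)) := this
      _ = a / (1 - γ) * r := by ring
  have t2 : (Real.exp 1 - 2) * a ^ 2 * ((∑ n, v n * rhat n ^ 2) / V) ≤
      (Real.exp 1 - 2) * a ^ 2 * D / (1 - γ) * ∑ n, rhat n := by
    have := mul_le_mul_of_nonneg_left hS2 (by positivity : (0:ℝ) ≤ (Real.exp 1 - 2) * a ^ 2)
    calc (Real.exp 1 - 2) * a ^ 2 * ((∑ n, v n * rhat n ^ 2) / V)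
        ≤ (Real.exp 1 - 2) * a ^ 2 * (D * (∑ n, rhat n) / (1 - γ)) := this
      _ = (Real.exp 1 - 2) * a ^ 2 * D / (1 - γ) * ∑ n, rhat n := by ring
  linarith
end

section
/- (Pathwise reward bound at the core of Theorem 4.) Let N ≥ 1, T ≥ 1, γ ∈ (0,1), and C, D > 0. Define weight vectors v_t : Fin N → ℝ recursively by v_1(n) = 1 for all n and v_{t+1}(n) = v_t(n)·exp(γ·r̂_t(n)/(N·C)), where at each round t: w_t(n) := (1−γ)·v_t(n)/(Σ_m v_t(m)) + γ/N; S_t ⊆ Fin N is an arbitrary excluded set with selected arm a_t ∉ S_t; q_t(n) := w_t(n)/(Σ_{m ∉ S_t} w_t(m)) for n ∉ S_t; the realized reward r_t satisfies 0 ≤ r_t ≤ D and C ≥ γ·r_t/(N·q_t(a_t)); and the reward estimates are r̂_t(a_t) := r_t/q_t(a_t) and r̂_t(n) := 0 for n ≠ a_t. Then for every arm j ∈ Fin N: Σ_{t=1}^T r_t ≥ (1−γ)·Σ_{t=1}^T r̂_t(j) − (N·C·ln N)/γ − (e−2)·(γ·D/(N·C))·Σ_{t=1}^T Σ_{n} r̂_t(n).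 -/
/-!
The potential `W_t = ∑ₙ v_t(n)` grows by at most a factor
`exp ((η r_t + (e - 2) η² D ∑ₙ r̂_t(n)) / (1 - γ))` per round, where `η = γ / (N C)`: the hypothesis
on `C` makes every exponent `η r̂_t(n)` lie in `[0, 1]`, where `exp x ≤ 1 + x + (e - 2) x²`; the
weights dominate `(1 - γ) v_t / W_t`; and under `w_t` the estimate `r̂_t` has first moment at most
`r_t` and second moment at most `r_t ∑ₙ r̂_t(n)`. Since `W_1 = N` and `W_{T+1} ≥ v_{T+1}(j) =
exp (η ∑_t r̂_t(j))`, taking logarithms and multiplying by `(1 - γ) / η` gives the bound.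
-/

open Real Finset

theorem Real.exp_le_one_add_add_mul_sq {x : ℝ} (h0 : 0 ≤ x) (h1 : x ≤ 1) :
    exp x ≤ 1 + x + (exp 1 - 2) * x ^ 2 := by
  have tail (y : ℝ) :
      HasSum (fun n : ℕ => y ^ (n + 2) / (n + 2).factorial) (exp y - 1 - y) := by
    have h := NormedSpace.expSeries_div_hasSum_exp y
    rw [← exp_eq_exp_ℝ, ← hasSum_nat_add_iff' 2] at h
    simpa [sum_range_succ, sub_sub] using h
  have hle := hasSum_le (fun n => ?_) (tail x) ((tail 1).mul_left (x ^ 2))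
  · linarith
  · rw [one_pow, mul_one_div, pow_add]
    gcongr
    exact mul_le_of_le_one_left (sq_nonneg x) (pow_le_one₀ h0 h1)

theorem sum_mul_exp_le_mul_exp {ι : Type*} [Fintype ι] {v w x : ι → ℝ} {η β : ℝ} (hβ : 0 < β)
    (hv : ∀ n, 0 ≤ v n) (hx0 : ∀ n, 0 ≤ η * x n) (hx1 : ∀ n, η * x n ≤ 1)
    (hvw : ∀ n, β * v n ≤ (∑ m, v m) * w n) :
    ∑ n, v n * exp (η * x n) ≤
      (∑ n, v n) * exp ((η * ∑ n, w n * x n + (exp 1 - 2) * η ^ 2 * ∑ n, w n * x n ^ 2) / β) := by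
  set V := ∑ n, v n
  set c := exp 1 - 2
  set E := (η * ∑ n, w n * x n + c * η ^ 2 * ∑ n, w n * x n ^ 2) / β
  have hc : 0 ≤ c := by linarith [exp_one_gt_d9]
  have hV : 0 ≤ V := sum_nonneg fun n _ => hv n
  have hmix : ∑ n, w n * (η * x n + c * (η * x n) ^ 2) =
      η * ∑ n, w n * x n + c * η ^ 2 * ∑ n, w n * x n ^ 2 := by
    rw [mul_sum, mul_sum, ← sum_add_distrib]
    exact sum_congr rfl fun n _ => by ring
  calc ∑ n, v n * exp (η * x n)
      ≤ ∑ n, (v n + V / β * (w n * (η * x n + c * (η * x n) ^ 2))) := by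
        refine sum_le_sum fun n _ => ?_
        have hvn : v n ≤ V / β * w n := by
          rw [div_mul_eq_mul_div, le_div_iff₀ hβ]; linarith [hvw n]
        have hgain : 0 ≤ η * x n + c * (η * x n) ^ 2 :=
          add_nonneg (hx0 n) (mul_nonneg hc (sq_nonneg _))
        calc v n * exp (η * x n) ≤ v n * (1 + η * x n + c * (η * x n) ^ 2) :=
              mul_le_mul_of_nonneg_left (exp_le_one_add_add_mul_sq (hx0 n) (hx1 n)) (hv n)
          _ ≤ v n + V / β * w n * (η * x n + c * (η * x n) ^ 2) := by
              nlinarith [mul_le_mul_of_nonneg_right hvn hgain]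
          _ = _ := by ring
    _ = V * (1 + E) := by
        rw [sum_add_distrib, ← mul_sum, hmix]
        change V + _ = _
        simp only [E]
        field_simp
    _ ≤ V * exp E := by
        gcongr
        linarith [add_one_le_exp E]

theorem le_mul_exp_sum_Icc {f g : ℕ → ℝ} {T : ℕ}
    (h : ∀ t, 1 ≤ t → t ≤ T → f (t + 1) ≤ f t * exp (g t)) :
    f (T + 1) ≤ f 1 * exp (∑ t ∈ Icc 1 T, g t) := by
  induction T with
  | zero => simp
  | succ T ih =>
    rw [sum_Icc_succ_top (by omega), exp_add, ← mul_assoc]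
    calc f (T + 1 + 1) ≤ f (T + 1) * exp (g (T + 1)) := h (T + 1) (by omega) le_rfl
      _ ≤ f 1 * exp (∑ t ∈ Icc 1 T, g t) * exp (g (T + 1)) := by
        gcongr
        exact ih fun t ht1 htT => h t ht1 (by omega)

theorem mul_exp_sum_Icc_le {f g : ℕ → ℝ} {T : ℕ}
    (h : ∀ t, 1 ≤ t → t ≤ T → f t * exp (g t) ≤ f (t + 1)) :
    f 1 * exp (∑ t ∈ Icc 1 T, g t) ≤ f (T + 1) := by
  simpa [neg_mul] using le_mul_exp_sum_Icc (f := -f) (g := g) fun t ht1 htT => by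
    simpa [neg_mul] using h t ht1 htT

section MultiplicativeWeights

variable {ι : Type*} {T : ℕ} {η : ℝ} {v x : ℕ → ι → ℝ}

theorem pos_of_eq_mul_exp (hv1 : ∀ n, 0 < v 1 n)
    (hvrec : ∀ t, 1 ≤ t → t ≤ T → ∀ n, v (t + 1) n = v t n * exp (η * x t n)) :
    ∀ t, 1 ≤ t → t ≤ T + 1 → ∀ n, 0 < v t n := by
  intro t ht1
  induction t, ht1 using Nat.le_induction with
  | base => exact fun _ => hv1
  | succ t ht ih =>
    intro ht2 n
    rw [hvrec t ht (by omega) n]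
    exact mul_pos (ih (by omega) n) (exp_pos _)

theorem mul_sum_le_log_card_add_sum [Fintype ι] {g : ℕ → ℝ} (hv1 : ∀ n, v 1 n = 1)
    (hvrec : ∀ t, 1 ≤ t → t ≤ T → ∀ n, v (t + 1) n = v t n * exp (η * x t n))
    (hpot : ∀ t, 1 ≤ t → t ≤ T → ∑ n, v (t + 1) n ≤ (∑ n, v t n) * exp (g t)) (j : ι) :
    η * ∑ t ∈ Icc 1 T, x t j ≤ log (Fintype.card ι) + ∑ t ∈ Icc 1 T, g t := by
  have hvpos := pos_of_eq_mul_exp (fun n => (hv1 n).symm ▸ one_pos) hvrec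
  have hvj : exp (∑ t ∈ Icc 1 T, η * x t j) ≤ v (T + 1) j := by
    simpa [hv1] using mul_exp_sum_Icc_le (f := fun t => v t j) fun t ht1 htT =>
      (hvrec t ht1 htT j).ge
  have hvW : v (T + 1) j ≤ ∑ n, v (T + 1) n :=
    single_le_sum (fun n _ => (hvpos (T + 1) (by omega) le_rfl n).le) (mem_univ j)
  have hW := le_mul_exp_sum_Icc (f := fun t => ∑ n, v t n) hpot
  have hcard : (0 : ℝ) < Fintype.card ι := by exact_mod_cast Fintype.card_pos_iff.2 ⟨j⟩
  rw [mul_sum, ← exp_le_exp, exp_add, exp_log hcard]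
  simpa [hv1] using hvj.trans (hvW.trans hW)

end MultiplicativeWeights

section ImportanceWeighting

variable {ι : Type*} [Fintype ι] [DecidableEq ι] {w rhat : ι → ℝ} {S : Finset ι} {a : ι} {q r : ℝ}

theorem importance_estimate_nonneg (hw : ∀ n, 0 ≤ w n)
    (hq : q = w a / ∑ m ∈ univ \ S, w m) (hr : 0 ≤ r) (hrhat_a : rhat a = r / q)
    (hrhat_ne : ∀ n, n ≠ a → rhat n = 0) (n : ι) : 0 ≤ rhat n := by
  by_cases h : n = a
  · rw [h, hrhat_a, hq]
    exact div_nonneg hr (div_nonneg (hw a) (sum_nonneg fun m _ => hw m))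
  · rw [hrhat_ne n h]

theorem sum_mul_importance_estimate_pow (hwa : w a ≠ 0)
    (hq : q = w a / ∑ m ∈ univ \ S, w m) (hrhat_a : rhat a = r / q)
    (hrhat_ne : ∀ n, n ≠ a → rhat n = 0) (k : ℕ) :
    ∑ n, w n * rhat n ^ (k + 1) = (∑ m ∈ univ \ S, w m) * r * rhat a ^ k := by
  have hwr : w a * rhat a = (∑ m ∈ univ \ S, w m) * r := by
    rw [hrhat_a, hq, div_div_eq_mul_div, mul_div_cancel₀ _ hwa, mul_comm]
  rw [sum_eq_single a (fun n _ h => by rw [hrhat_ne n h]; ring) (by simp), pow_succ',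
    ← mul_assoc, hwr]

end ImportanceWeighting

section Exp3Round

variable {N : ℕ} {γ : ℝ} {v w : Fin N → ℝ}

theorem exp3_weight_pos (hγ0 : 0 < γ) (hγ1 : γ < 1) (hv : ∀ n, 0 < v n)
    (hw : ∀ n, w n = (1 - γ) * v n / (∑ m, v m) + γ / N) (n : Fin N) : 0 < w n := by
  have hN : (0 : ℝ) < N := by exact_mod_cast n.pos
  have hV : 0 < ∑ m, v m := sum_pos (fun m _ => hv m) ⟨n, mem_univ n⟩
  have hvn := hv n
  have hγ : 0 < 1 - γ := by linarith
  rw [hw n]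
  positivity

theorem exp3_weight_sum [NeZero N] (hv : ∀ n, 0 < v n)
    (hw : ∀ n, w n = (1 - γ) * v n / (∑ m, v m) + γ / N) : ∑ n, w n = 1 := by
  have hV : 0 < ∑ m, v m := sum_pos (fun m _ => hv m) univ_nonempty
  have hN : (N : ℝ) ≠ 0 := Nat.cast_ne_zero.2 (NeZero.ne N)
  simp only [hw, sum_add_distrib, ← sum_div, ← mul_sum, sum_const, card_univ, Fintype.card_fin,
    nsmul_eq_mul]
  field_simp
  ring

theorem exp3_weight_ge (hγ0 : 0 < γ) (hv : ∀ n, 0 < v n)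
    (hw : ∀ n, w n = (1 - γ) * v n / (∑ m, v m) + γ / N) (n : Fin N) :
    (1 - γ) * v n ≤ (∑ m, v m) * w n := by
  have hV : 0 < ∑ m, v m := sum_pos (fun m _ => hv m) ⟨n, mem_univ n⟩
  rw [hw n, mul_add, mul_div_cancel₀ _ hV.ne', le_add_iff_nonneg_right]
  exact mul_nonneg hV.le (div_nonneg hγ0.le (Nat.cast_nonneg N))

theorem exp3_potential_step_le {C D r : ℝ} {q rhat : Fin N → ℝ} {S : Finset (Fin N)} {a : Fin N}
    (hγ0 : 0 < γ) (hγ1 : γ < 1) (hC : 0 < C) (hv : ∀ n, 0 < v n)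
    (hw : ∀ n, w n = (1 - γ) * v n / (∑ m, v m) + γ / N)
    (hq : q a = w a / ∑ m ∈ univ \ S, w m) (hr0 : 0 ≤ r) (hrD : r ≤ D)
    (hCbig : γ * r / (N * q a) ≤ C) (hrhat_a : rhat a = r / q a)
    (hrhat_ne : ∀ n, n ≠ a → rhat n = 0) :
    ∑ n, v n * exp (γ / (N * C) * rhat n) ≤ (∑ n, v n) *
      exp ((γ / (N * C) * r + (exp 1 - 2) * (γ / (N * C)) ^ 2 * (D * ∑ n, rhat n)) / (1 - γ)) := by
  have : NeZero N := ⟨a.pos.ne'⟩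
  have hwpos := exp3_weight_pos hγ0 hγ1 hv hw
  have hrhat0 := importance_estimate_nonneg (fun n => (hwpos n).le) hq hr0 hrhat_a hrhat_ne
  have hden : ∑ m ∈ univ \ S, w m ≤ 1 := exp3_weight_sum hv hw ▸
    sum_le_sum_of_subset_of_nonneg sdiff_subset fun n _ _ => (hwpos n).le
  have hdr : (∑ m ∈ univ \ S, w m) * r ≤ r := mul_le_of_le_one_left hr0 hden
  have hmoment := sum_mul_importance_estimate_pow (hwpos a).ne' hq hrhat_a hrhat_ne
  have hηrhat (n : Fin N) : γ / (N * C) * rhat n ≤ 1 := by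
    by_cases h : n = a
    · calc γ / (N * C) * rhat n = γ * r / (N * q a) / C := by rw [h, hrhat_a]; ring
        _ ≤ 1 := (div_le_one hC).2 hCbig
    · rw [hrhat_ne n h, mul_zero]; exact zero_le_one
  refine (sum_mul_exp_le_mul_exp (by linarith) (fun n => (hv n).le)
    (fun n => mul_nonneg (by positivity) (hrhat0 n)) hηrhat (exp3_weight_ge hγ0 hv hw)).trans ?_
  have h1 : ∑ n, w n * rhat n ≤ r := by
    simpa only [zero_add, pow_one, pow_zero, mul_one] using
      (hmoment 0).trans_le ((mul_one _).trans_le hdr)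
  have h2 : ∑ n, w n * rhat n ^ 2 ≤ D * ∑ n, rhat n := by
    rw [hmoment 1, pow_one]
    exact mul_le_mul (hdr.trans hrD) (single_le_sum (fun n _ => hrhat0 n) (mem_univ a))
      (hrhat0 a) (hr0.trans hrD)
  have hc : 0 ≤ exp 1 - 2 := by linarith [exp_one_gt_d9]
  have hγ : 0 < 1 - γ := by linarith
  gcongr
  exact sum_nonneg fun n _ => (hv n).le

end Exp3Round

theorem sub_sub_le_of_mul_le_add_div {γ η L R X Y : ℝ} (hγ0 : 0 ≤ γ) (hγ1 : γ < 1) (hη : 0 < η)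
    (hL : 0 ≤ L) (h : η * X ≤ L + (η * R + η ^ 2 * Y) / (1 - γ)) :
    (1 - γ) * X - L / η - η * Y ≤ R := by
  have h1 : 0 < 1 - γ := by linarith
  have h2 : (1 - γ) * (η * X) ≤ (1 - γ) * L + (η * R + η ^ 2 * Y) := by
    have := mul_le_mul_of_nonneg_left h h1.le
    rwa [mul_add, mul_div_cancel₀ _ h1.ne'] at this
  refine le_of_mul_le_mul_left ?_ hη
  rw [mul_sub, mul_sub, mul_div_cancel₀ _ hη.ne']
  nlinarith

theorem rsb_pathwise_reward_bound_general
    (N T : ℕ)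
    (γ C D : ℝ) (hγ0 : 0 < γ) (hγ1 : γ < 1) (hC : 0 < C)
    (v w q rhat : ℕ → Fin N → ℝ)
    (S : ℕ → Finset (Fin N)) (a : ℕ → Fin N) (r : ℕ → ℝ)
    (hv1 : ∀ n, v 1 n = 1)
    (hw : ∀ t, 1 ≤ t → t ≤ T → ∀ n,
      w t n = (1 - γ) * v t n / (∑ m, v t m) + γ / N)
    (ha : ∀ t, 1 ≤ t → t ≤ T → a t ∉ S t)
    (hq : ∀ t, 1 ≤ t → t ≤ T → ∀ n ∉ S t,
      q t n = w t n / (∑ m ∈ Finset.univ \ S t, w t m))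
    (hr0 : ∀ t, 1 ≤ t → t ≤ T → 0 ≤ r t)
    (hrD : ∀ t, 1 ≤ t → t ≤ T → r t ≤ D)
    (hCbig : ∀ t, 1 ≤ t → t ≤ T → γ * r t / (N * q t (a t)) ≤ C)
    (hrhat_a : ∀ t, 1 ≤ t → t ≤ T → rhat t (a t) = r t / q t (a t))
    (hrhat_ne : ∀ t, 1 ≤ t → t ≤ T → ∀ n, n ≠ a t → rhat t n = 0)
    (hvrec : ∀ t, 1 ≤ t → t ≤ T → ∀ n,
      v (t + 1) n = v t n * Real.exp (γ * rhat t n / (N * C))) :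
    ∀ j : Fin N,
      ∑ t ∈ Finset.Icc 1 T, r t ≥
        (1 - γ) * ∑ t ∈ Finset.Icc 1 T, rhat t j -
          N * C * Real.log N / γ -
          (Real.exp 1 - 2) * (γ * D / (N * C)) *
            ∑ t ∈ Finset.Icc 1 T, ∑ n, rhat t n := by
  intro j
  have hvrec' (t : ℕ) (ht1 : 1 ≤ t) (htT : t ≤ T) (n : Fin N) :
      v (t + 1) n = v t n * exp (γ / (N * C) * rhat t n) := by
    rw [hvrec t ht1 htT n, div_mul_eq_mul_div, mul_comm γ]
  have hvpos := pos_of_eq_mul_exp (fun n => (hv1 n).symm ▸ one_pos) hvrec'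
  have key := mul_sum_le_log_card_add_sum hv1 hvrec' (fun t ht1 htT => by
    simp only [hvrec' t ht1 htT]
    exact exp3_potential_step_le hγ0 hγ1 hC (hvpos t ht1 (by omega)) (hw t ht1 htT)
      (hq t ht1 htT _ (ha t ht1 htT)) (hr0 t ht1 htT) (hrD t ht1 htT) (hCbig t ht1 htT)
      (hrhat_a t ht1 htT) (hrhat_ne t ht1 htT)) j
  rw [← sum_div, sum_add_distrib, ← mul_sum, ← mul_sum, ← mul_sum, Fintype.card_fin] at key
  have hN : (0 : ℝ) < N := by exact_mod_cast j.pos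
  have hbound := sub_sub_le_of_mul_le_add_div hγ0.le hγ1 (by positivity) (log_natCast_nonneg N)
    (R := ∑ t ∈ Icc 1 T, r t) (Y := (exp 1 - 2) * (D * ∑ t ∈ Icc 1 T, ∑ n, rhat t n)) (key.trans_eq (by ring))
  have hlog : log N / (γ / (N * C)) = N * C * log N / γ := by field_simp
  have hquad : γ / (N * C) * ((exp 1 - 2) * (D * ∑ t ∈ Icc 1 T, ∑ n, rhat t n)) =
      (exp 1 - 2) * (γ * D / (N * C)) * ∑ t ∈ Icc 1 T, ∑ n, rhat t n := by ring
  rwa [hlog, hquad] at hbound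

/-- **Pathwise reward bound at the core of Theorem 4.** Under the exponential-weight
(Exp3-style) update of the RSB algorithm, for every arm `j`,
`Σ_{t=1}^T r_t ≥ (1−γ)·Σ_{t=1}^T r̂_t(j) − (N·C·ln N)/γ
  − (e−2)·(γ·D/(N·C))·Σ_{t=1}^T Σ_n r̂_t(n)`. -/
theorem rsb_pathwise_reward_bound
    (N T : ℕ) (hN : 1 ≤ N) (hT : 1 ≤ T)
    (γ C D : ℝ) (hγ0 : 0 < γ) (hγ1 : γ < 1) (hC : 0 < C) (hD : 0 < D)
    (v w q rhat : ℕ → Fin N → ℝ)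
    (S : ℕ → Finset (Fin N)) (a : ℕ → Fin N) (r : ℕ → ℝ)
    (hv1 : ∀ n, v 1 n = 1)
    (hw : ∀ t, 1 ≤ t → t ≤ T → ∀ n,
      w t n = (1 - γ) * v t n / (∑ m, v t m) + γ / N)
    (ha : ∀ t, 1 ≤ t → t ≤ T → a t ∉ S t)
    (hq : ∀ t, 1 ≤ t → t ≤ T → ∀ n ∉ S t,
      q t n = w t n / (∑ m ∈ Finset.univ \ S t, w t m))
    (hr0 : ∀ t, 1 ≤ t → t ≤ T → 0 ≤ r t)
    (hrD : ∀ t, 1 ≤ t → t ≤ T → r t ≤ D)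
    (hCbig : ∀ t, 1 ≤ t → t ≤ T → γ * r t / (N * q t (a t)) ≤ C)
    (hrhat_a : ∀ t, 1 ≤ t → t ≤ T → rhat t (a t) = r t / q t (a t))
    (hrhat_ne : ∀ t, 1 ≤ t → t ≤ T → ∀ n, n ≠ a t → rhat t n = 0)
    (hvrec : ∀ t, 1 ≤ t → t ≤ T → ∀ n,
      v (t + 1) n = v t n * Real.exp (γ * rhat t n / (N * C))) :
    ∀ j : Fin N,
      ∑ t ∈ Finset.Icc 1 T, r t ≥
        (1 - γ) * ∑ t ∈ Finset.Icc 1 T, rhat t j -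
          N * C * Real.log N / γ -
          (Real.exp 1 - 2) * (γ * D / (N * C)) *
            ∑ t ∈ Finset.Icc 1 T, ∑ n, rhat t n :=
  rsb_pathwise_reward_bound_general N T γ C D hγ0 hγ1 hC v w q rhat S a r hv1 hw ha hq hr0 hrD hCbig
    hrhat_a hrhat_ne hvrec
end

section
/- (Greedy (1 − 1/e)-approximation for monotone submodular maximization.) Let F be a monotone submodular set function on a finite ground set with F(∅) = 0, and let K ≥ 1 with the ground set having at least K elements. Define the greedy sequence G_0 = ∅ and G_k = G_{k−1} ∪ {g_k} for k = 1,…,K, where g_k is an element maximizing F(G_{k−1} ∪ {a}) − F(G_{k−1}) over all ground elements a. Then F(G_K) ≥ (1 − 1/e)·max{F(S) : S a subset of the ground set with |S| ≤ K}. -/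
lemma submod_union_sum {α : Type*} [DecidableEq α] (F : Finset α → ℝ)
    (hsub : Submodular F) (A : Finset α) (S : Finset α) :
    F (A ∪ S) - F A ≤ ∑ a ∈ S, (F (insert a A) - F A) := by
  induction S using Finset.induction_on with
  | empty => simp
  | @insert a S ha ih =>
      rw [Finset.sum_insert ha]
      have h1 : A ∪ insert a S = insert a (A ∪ S) := by
        ext x; simp [or_comm, or_left_comm]
      have h2 := hsub A (A ∪ S) Finset.subset_union_left a
      rw [h1]
      linarith

/-- **Greedy (1 − 1/e)-approximation for monotone submodular maximization.** The
greedy sequence `G_0 = ∅`, `G_k = G_{k−1} ∪ {g_k}` with `g_k` maximizing the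
marginal gain, satisfies `F(G_K) ≥ (1 − 1/e)·max{F(S) : |S| ≤ K}`. -/
theorem greedy_submodular_approximation
    {α : Type*} [Fintype α] [DecidableEq α]
    (F : Finset α → ℝ) (hmono : MonotoneSetFun F) (hsub : Submodular F)
    (hempty : F ∅ = 0)
    (K : ℕ) (hK : 1 ≤ K) (hcard : K ≤ Fintype.card α)
    (g : ℕ → α) (G : ℕ → Finset α)
    (hG0 : G 0 = ∅)
    (hGk : ∀ k, 1 ≤ k → k ≤ K → G k = insert (g k) (G (k - 1)))
    (hgreedy : ∀ k, 1 ≤ k → k ≤ K → ∀ a : α,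
      F (insert a (G (k - 1))) - F (G (k - 1)) ≤
        F (insert (g k) (G (k - 1))) - F (G (k - 1))) :
    ∀ S : Finset α, S.card ≤ K → (1 - 1 / Real.exp 1) * F S ≤ F (G K) := by
  intro S hS
  have hKpos : (0:ℝ) < (K:ℝ) := by exact_mod_cast hK
  have hFS : 0 ≤ F S := by
    have := hmono ∅ S (Finset.empty_subset S); linarith [hempty ▸ this]
  have h1K : (0:ℝ) ≤ 1 - 1/(K:ℝ) := by
    have : 1/(K:ℝ) ≤ 1 := by
      rw [div_le_one hKpos]; exact_mod_cast hK
    linarith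
  -- gain bound
  have hgain : ∀ k, k < K → F S - F (G k) ≤ (K:ℝ) * (F (G (k+1)) - F (G k)) := by
    intro k hk
    have hk1 : 1 ≤ k + 1 := Nat.le_add_left 1 k
    have hk2 : k + 1 ≤ K := hk
    have hGk1 : G (k+1) = insert (g (k+1)) (G k) := by
      simpa using hGk (k+1) hk1 hk2
    set gain := F (G (k+1)) - F (G k) with hgaindef
    have hmarg : ∀ a : α, F (insert a (G k)) - F (G k) ≤ gain := by
      intro a
      have := hgreedy (k+1) hk1 hk2 a
      simp only [Nat.add_sub_cancel] at this
      rw [hgaindef, hGk1]; exact this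
    have hgain0 : 0 ≤ gain := by
      have : 0 < Fintype.card α := lt_of_lt_of_le (Nat.lt_of_le_of_lt (Nat.zero_le k) hk) hcard
      obtain ⟨a0⟩ := Fintype.card_pos_iff.mp this
      have h1 := hmarg a0
      have h2 := hmono (G k) (insert a0 (G k)) (Finset.subset_insert a0 (G k))
      linarith
    have hsum := submod_union_sum F hsub (G k) S
    have hsum2 : ∑ a ∈ S, (F (insert a (G k)) - F (G k)) ≤ ∑ a ∈ S, gain :=
      Finset.sum_le_sum (fun a _ => hmarg a)
    have hsum3 : ∑ a ∈ S, gain = (S.card : ℝ) * gain := by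
      rw [Finset.sum_const, nsmul_eq_mul]
    have hcardle : (S.card : ℝ) ≤ (K:ℝ) := by exact_mod_cast hS
    have hmonoS : F S ≤ F (G k ∪ S) := hmono S (G k ∪ S) Finset.subset_union_right
    have : (S.card : ℝ) * gain ≤ (K:ℝ) * gain :=
      mul_le_mul_of_nonneg_right hcardle hgain0
    linarith
  -- main induction
  have main : ∀ k, k ≤ K → F S - F (G k) ≤ (1 - 1/(K:ℝ))^k * F S := by
    intro k
    induction k with
    | zero => intro _; simp [hG0, hempty]
    | succ k ih =>
        intro hk1
        have hkK : k < K := hk1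
        have ihk := ih (Nat.le_of_lt hkK)
        have hg := hgain k hkK
        have hdiv : (F S - F (G k)) / (K:ℝ) ≤ F (G (k+1)) - F (G k) := by
          rw [div_le_iff₀ hKpos]; linarith
        have step : F S - F (G (k+1)) ≤ (1 - 1/(K:ℝ)) * (F S - F (G k)) := by
          have hring : (1 - 1/(K:ℝ)) * (F S - F (G k))
              = (F S - F (G k)) - (F S - F (G k)) / (K:ℝ) := by
            field_simp
          rw [hring]; linarith
        calc F S - F (G (k+1)) ≤ (1 - 1/(K:ℝ)) * (F S - F (G k)) := step
          _ ≤ (1 - 1/(K:ℝ)) * ((1 - 1/(K:ℝ))^k * F S) :=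
              mul_le_mul_of_nonneg_left ihk h1K
          _ = (1 - 1/(K:ℝ))^(k+1) * F S := by ring
  have hKK := main K le_rfl
  have hexp : (1 - 1/(K:ℝ))^K ≤ 1 / Real.exp 1 := by
    have h1 : 1 - 1/(K:ℝ) ≤ Real.exp (-(1/(K:ℝ))) := by
      have := Real.add_one_le_exp (-(1/(K:ℝ))); linarith
    calc (1 - 1/(K:ℝ))^K ≤ (Real.exp (-(1/(K:ℝ))))^K := pow_le_pow_left₀ h1K h1 K
      _ = Real.exp ((K:ℝ) * (-(1/(K:ℝ)))) := (Real.exp_nat_mul _ K).symm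
      _ = Real.exp (-1) := by
          congr 1; field_simp
      _ = 1 / Real.exp 1 := by rw [Real.exp_neg]; exact (one_div _).symm
  have hfinal : (1 - 1/(K:ℝ))^K * F S ≤ (1 / Real.exp 1) * F S :=
    mul_le_mul_of_nonneg_right hexp hFS
  linarith
end
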